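/- For a ≥ 2, the genus of S(a) satisfies 5·g(S(a)) = (a−2)·f_a + a·f_{a−2}; equivalently g(S(a)) = ((a−2)·f_a + a·f_{a−2})/5. -/

import Mathlib

/-!
Let `z t` be the number of terms in the Zeckendorf representation of `t`. Zeckendorf
representations are shortest, in the form `z (u + fib b) ≤ z u + 1`; the induction behind this
also needs `z (w - fib a) ≤ z w` for `fib a ≤ w < 2 * fib a`, which together with subadditivity
of `z` shows that `{m | z (m % fib a) ≤ m / fib a}` is a submonoid. It contains the generators
`fib a + fib n`, and conversely padding the Zeckendorf representation of `m % fib a` with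
`fib 0 = 0` writes such an `m` as a sum of `m / fib a` generators. So this submonoid is `S a`, the
gaps of residue `t` are `t + k * fib a` with `k < z t`, and `g(S a) = ∑ t < fib a, z t`. Since
`z (fib (n + 2) + s) = z s + 1` for `s < fib (n + 1)`, these sums satisfy
`G (n + 3) = G (n + 2) + G (n + 1) + fib (n + 1)`, which the closed form solves.
-/

def S (a : ℕ) : AddSubmonoid ℕ :=
  AddSubmonoid.closure {m : ℕ | ∃ n : ℕ, m = Nat.fib a + Nat.fib n}

open Nat Finset

def zeckendorfLength (n : ℕ) : ℕ := (zeckendorf n).length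

@[simp] lemma zeckendorfLength_zero : zeckendorfLength 0 = 0 := by simp [zeckendorfLength]

lemma greatestFib_fib_add {m s : ℕ} (hs : s < fib (m + 1)) :
    greatestFib (fib (m + 2) + s) = m + 2 := by
  have h3 : fib (m + 3) = fib (m + 1) + fib (m + 2) := fib_add_two
  exact le_antisymm (Nat.lt_succ_iff.1 ((greatestFib_lt (n := m + 3)).2 (by omega)))
    (le_greatestFib.2 (by omega))

lemma zeckendorfLength_fib_add {m s : ℕ} (hs : s < fib (m + 1)) :
    zeckendorfLength (fib (m + 2) + s) = zeckendorfLength s + 1 := by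
  have : 0 < fib (m + 2) := fib_pos.2 (by omega)
  rw [zeckendorfLength, zeckendorf_of_pos (by omega), greatestFib_fib_add hs, List.length_cons,
    Nat.add_sub_cancel_left, zeckendorfLength]

lemma exists_eq_fib_add {n : ℕ} (hn : 0 < n) :
    ∃ m s, n = fib (m + 2) + s ∧ s < fib (m + 1) := by
  obtain ⟨m, hm⟩ : ∃ m, greatestFib n = m + 2 :=
    Nat.exists_eq_add_of_le' (le_greatestFib.2 (by rw [fib_two]; exact hn))
  have hle : fib (m + 2) ≤ n := hm ▸ fib_greatestFib_le n
  have hlt : n < fib (m + 3) := by simpa [hm] using lt_fib_greatestFib_add_one n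
  have h3 : fib (m + 3) = fib (m + 1) + fib (m + 2) := fib_add_two
  exact ⟨m, n - fib (m + 2), by omega, by omega⟩

lemma zeckendorfLength_fib_le_one (n : ℕ) : zeckendorfLength (fib n) ≤ 1 := by
  rcases n with _ | _ | n
  · simp
  · simpa using (zeckendorfLength_fib_add (m := 0) (s := 0) (by simp)).le
  · simpa using (zeckendorfLength_fib_add (m := n) (s := 0) (fib_pos.2 (by omega))).le

lemma zeckendorfLength_sub_fib_le {a w : ℕ} (h₁ : fib a ≤ w) (h₂ : w < 2 * fib a) :
    zeckendorfLength (w - fib a) ≤ zeckendorfLength w := by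
  obtain ⟨m, r, rfl, hr⟩ := exists_eq_fib_add (show 0 < w by omega)
  have e2 : fib (m + 2) = fib m + fib (m + 1) := fib_add_two
  have e3 : fib (m + 3) = fib (m + 1) + fib (m + 2) := fib_add_two
  rw [zeckendorfLength_fib_add hr]
  rcases lt_trichotomy a (m + 1) with ha | rfl | ha
  · have := fib_mono (show a ≤ m by omega)
    have := fib_le_fib_succ (n := m)
    omega
  · rcases m with _ | _ | k
    · simp_all
    · simp_all
    · simp only [add_assoc, Nat.reduceAdd] at *
      have e1 : fib (k + 3) = fib (k + 1) + fib (k + 2) := fib_add_two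
      have hs : r < fib (k + 1) := by omega
      rw [show fib (k + 4) + r - fib (k + 3) = fib (k + 2) + r by omega,
        zeckendorfLength_fib_add hs]
  · rcases (show a = m + 2 ∨ m + 3 ≤ a by omega) with rfl | ha
    · simp
    · have := fib_mono ha
      omega

lemma zeckendorfLength_add_fib_le (u b : ℕ) :
    zeckendorfLength (u + fib b) ≤ zeckendorfLength u + 1 := by
  induction u using Nat.strong_induction_on generalizing b with
  | _ u ih =>
  rcases u.eq_zero_or_pos with rfl | hu
  · simpa using zeckendorfLength_fib_le_one b
  obtain ⟨m, r, rfl, hr⟩ := exists_eq_fib_add hu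
  have ihr := ih r (by have := fib_pos.2 (show 0 < m + 2 by omega); omega)
  have e2 : fib (m + 2) = fib m + fib (m + 1) := fib_add_two
  have e3 : fib (m + 3) = fib (m + 1) + fib (m + 2) := fib_add_two
  have e4 : fib (m + 4) = fib (m + 2) + fib (m + 3) := fib_add_two
  rw [zeckendorfLength_fib_add hr]
  rcases lt_or_ge b (m + 2) with hb | hb
  · have hfb : fib b ≤ fib (m + 1) := fib_mono (by omega)
    rcases lt_or_ge (r + fib b) (fib (m + 1)) with hw | hw
    · rw [add_assoc, zeckendorfLength_fib_add hw]
      linarith [ihr b]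
    · have hs : r + fib b - fib (m + 1) < fib (m + 2) := by omega
      rw [show fib (m + 2) + r + fib b = fib (m + 3) + (r + fib b - fib (m + 1)) by omega,
        zeckendorfLength_fib_add hs]
      linarith [ihr b, zeckendorfLength_sub_fib_le hw (show r + fib b < 2 * fib (m + 1) by omega)]
  rcases (show b = m + 2 ∨ b = m + 3 ∨ m + 4 ≤ b by omega) with rfl | rfl | hb
  · have hs : r + fib m < fib (m + 2) := by omega
    rw [show fib (m + 2) + r + fib (m + 2) = fib (m + 3) + (r + fib m) by omega,
      zeckendorfLength_fib_add hs]
    linarith [ihr m]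
  · have hs : r < fib (m + 3) := by omega
    rw [show fib (m + 2) + r + fib (m + 3) = fib (m + 4) + r by omega,
      zeckendorfLength_fib_add hs]
    omega
  · obtain ⟨k, rfl⟩ := Nat.exists_eq_add_of_le' (show 2 ≤ b by omega)
    have hs : fib (m + 2) + r < fib (k + 1) :=
      (show fib (m + 2) + r < fib (m + 3) by omega).trans_le (fib_mono (by omega))
    rw [add_comm, zeckendorfLength_fib_add hs, zeckendorfLength_fib_add hr]

lemma zeckendorfLength_add_sum_fib_le (u : ℕ) (l : List ℕ) :
    zeckendorfLength (u + (l.map fib).sum) ≤ zeckendorfLength u + l.length := by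
  induction l generalizing u with
  | nil => simp
  | cons i l ih =>
    rw [List.map_cons, List.sum_cons, ← add_assoc, List.length_cons]
    linarith [ih (u + fib i), zeckendorfLength_add_fib_le u i]

lemma zeckendorfLength_add_le (u v : ℕ) :
    zeckendorfLength (u + v) ≤ zeckendorfLength u + zeckendorfLength v := by
  simpa [zeckendorfLength] using zeckendorfLength_add_sum_fib_le u (zeckendorf v)

lemma zeckendorfLength_mod_fib_add_le {a m n : ℕ}
    (hm : zeckendorfLength (m % fib a) ≤ m / fib a)
    (hn : zeckendorfLength (n % fib a) ≤ n / fib a) :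
    zeckendorfLength ((m + n) % fib a) ≤ (m + n) / fib a := by
  rcases (fib a).eq_zero_or_pos with hf | hf
  · simp only [hf, Nat.mod_zero, Nat.div_zero, nonpos_iff_eq_zero] at hm hn ⊢
    simpa [hm, hn] using zeckendorfLength_add_le m n
  have hsum := zeckendorfLength_add_le (m % fib a) (n % fib a)
  rcases lt_or_ge (m % fib a + n % fib a) (fib a) with hc | hc
  · rw [add_mod_of_add_mod_lt hc, add_div_eq_of_add_mod_lt hc]
    omega
  · have hlt : m % fib a + n % fib a < 2 * fib a := by
      have := mod_lt m hf; have := mod_lt n hf; omega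
    have hcarry := zeckendorfLength_sub_fib_le hc hlt
    rw [add_div_eq_of_le_mod_add_mod hc hf,
      show (m + n) % fib a = m % fib a + n % fib a - fib a by
        have := add_mod_add_of_le_add_mod hc; omega]
    omega

def fibRemainderSubmonoid (a : ℕ) : AddSubmonoid ℕ where
  carrier := {m | zeckendorfLength (m % fib a) ≤ m / fib a}
  add_mem' := zeckendorfLength_mod_fib_add_le
  zero_mem' := by simp

lemma mem_fibRemainderSubmonoid {a m : ℕ} :
    m ∈ fibRemainderSubmonoid a ↔ zeckendorfLength (m % fib a) ≤ m / fib a := Iff.rfl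

lemma fib_add_fib_mem_fibRemainderSubmonoid_of_le {a n : ℕ} (ha : 0 < a) (hn : n ≤ a) :
    fib a + fib n ∈ fibRemainderSubmonoid a := by
  have hf : 0 < fib a := fib_pos.2 ha
  have hmod : zeckendorfLength (fib n % fib a) ≤ 1 := by
    rcases (fib_mono hn).eq_or_lt with heq | hlt
    · simp [heq]
    · simpa [mod_eq_of_lt hlt] using zeckendorfLength_fib_le_one n
  rw [mem_fibRemainderSubmonoid, add_comm, add_mod_right, add_div_right _ hf]
  exact hmod.trans (le_add_left 1 _)

lemma fib_mem_fibRemainderSubmonoid {a n : ℕ} (ha : 0 < a) (hn : a ≤ n) :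
    fib n ∈ fibRemainderSubmonoid a := by
  obtain ⟨j, rfl⟩ := Nat.exists_eq_add_of_le hn
  induction j using Nat.twoStepInduction with
  | zero => simp [mem_fibRemainderSubmonoid]
  | one =>
    rw [fib_add_one ha.ne', add_comm]
    exact fib_add_fib_mem_fibRemainderSubmonoid_of_le ha (sub_le a 1)
  | more j ih₀ ih₁ =>
    rw [← add_assoc, fib_add_two]
    exact add_mem (ih₀ (by omega)) (ih₁ (by omega))

lemma fib_add_fib_mem_fibRemainderSubmonoid {a : ℕ} (ha : 0 < a) (n : ℕ) :
    fib a + fib n ∈ fibRemainderSubmonoid a := by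
  rcases le_total n a with hn | hn
  · exact fib_add_fib_mem_fibRemainderSubmonoid_of_le ha hn
  · exact add_mem (fib_mem_fibRemainderSubmonoid ha le_rfl) (fib_mem_fibRemainderSubmonoid ha hn)

lemma length_mul_fib_add_sum_fib_mem_S (a : ℕ) (l : List ℕ) :
    l.length * fib a + (l.map fib).sum ∈ S a := by
  induction l with
  | nil => simp
  | cons i l ih =>
    have hgen : fib a + fib i ∈ S a := AddSubmonoid.subset_closure ⟨i, rfl⟩
    convert add_mem hgen ih using 1
    simp only [List.length_cons, List.map_cons, List.sum_cons]
    ring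

lemma S_eq_fibRemainderSubmonoid {a : ℕ} (ha : 0 < a) : S a = fibRemainderSubmonoid a := by
  refine le_antisymm (AddSubmonoid.closure_le.2 ?_) fun m hm ↦ ?_
  · rintro _ ⟨n, rfl⟩
    exact fib_add_fib_mem_fibRemainderSubmonoid ha n
  · rw [mem_fibRemainderSubmonoid] at hm
    have := length_mul_fib_add_sum_fib_mem_S a
      (zeckendorf (m % fib a) ++ List.replicate (m / fib a - zeckendorfLength (m % fib a)) 0)
    rw [List.length_append, List.length_replicate, ← zeckendorfLength,
      Nat.add_sub_cancel' hm] at this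
    simpa [div_add_mod'] using this

lemma setOf_notMem_S {a : ℕ} (ha : 0 < a) :
    {m | m ∉ S a} = {m | m / fib a < zeckendorfLength (m % fib a)} := by
  ext m
  simp [S_eq_fibRemainderSubmonoid ha, mem_fibRemainderSubmonoid]

lemma ncard_setOf_div_lt_mod {f : ℕ} (hf : 0 < f) (g : ℕ → ℕ) :
    {m : ℕ | m / f < g (m % f)}.ncard = ∑ t ∈ range f, g t := by
  calc {m : ℕ | m / f < g (m % f)}.ncard
      = (((range f).sigma fun t ↦ range (g t) : Finset (Σ _ : ℕ, ℕ)) :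
          Set (Σ _ : ℕ, ℕ)).ncard := by
        refine Set.ncard_congr (fun m _ ↦ ⟨m % f, m / f⟩) (fun m hm ↦ ?_)
          (fun m n _ _ h ↦ ?_) (fun ⟨t, k⟩ h ↦ ?_)
        · simpa [mod_lt m hf] using hm
        · simp only [Sigma.mk.injEq, heq_eq_eq] at h
          rw [← div_add_mod m f, ← div_add_mod n f, h.1, h.2]
        · simp only [coe_sigma, Set.mem_sigma_iff, mem_coe, mem_range] at h
          obtain ⟨hk, ht⟩ := (Nat.div_mod_unique (d := k) (c := t) hf).2 ⟨rfl, h.1⟩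
          refine ⟨t + f * k, ?_, ?_⟩ <;> simp only [Set.mem_ofPred_eq, hk, ht]
          exact h.2
    _ = ∑ t ∈ range f, g t := by rw [Set.ncard_coe_finset, Finset.card_sigma]; simp

lemma sum_range_fib_add_three (m : ℕ) :
    ∑ t ∈ range (fib (m + 3)), zeckendorfLength t =
      ∑ t ∈ range (fib (m + 2)), zeckendorfLength t +
        ∑ t ∈ range (fib (m + 1)), zeckendorfLength t + fib (m + 1) := by
  have hshift : ∀ t ∈ range (fib (m + 1)),
      zeckendorfLength (fib (m + 2) + t) = zeckendorfLength t + 1 :=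
    fun t ht ↦ zeckendorfLength_fib_add (mem_range.1 ht)
  rw [show fib (m + 3) = fib (m + 2) + fib (m + 1) from (fib_add_two).trans (add_comm _ _),
    sum_range_add, sum_congr rfl hshift, sum_add_distrib, add_assoc]
  simp

lemma five_mul_sum_range_fib (b : ℕ) :
    5 * ∑ t ∈ range (fib (b + 2)), zeckendorfLength t = b * fib (b + 2) + (b + 2) * fib b := by
  induction b using Nat.twoStepInduction with
  | zero => simp
  | one =>
    simpa [show fib 3 = 2 from rfl, sum_range_succ] using
      zeckendorfLength_fib_add (m := 0) (s := 0) (by simp)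
  | more b ih₀ ih₁ =>
    replace ih₁ : 5 * ∑ t ∈ range (fib (b + 3)), zeckendorfLength t =
        (b + 1) * fib (b + 3) + (b + 3) * fib (b + 1) := ih₁
    have e2 : fib (b + 2) = fib b + fib (b + 1) := fib_add_two
    have e3 : fib (b + 3) = fib (b + 1) + fib (b + 2) := fib_add_two
    have e4 : fib (b + 4) = fib (b + 2) + fib (b + 3) := fib_add_two
    show 5 * ∑ t ∈ range (fib (b + 4)), zeckendorfLength t =
      (b + 2) * fib (b + 4) + (b + 4) * fib (b + 2)
    rw [sum_range_fib_add_three (b + 1), mul_add, mul_add, ih₁, ih₀, e4, e3, e2]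
    ring

theorem genus_S_closed_form (a : ℕ) (ha : 2 ≤ a) :
    5 * {m : ℕ | m ∉ S a}.ncard =
      (a - 2) * Nat.fib a + a * Nat.fib (a - 2) := by
  obtain ⟨b, rfl⟩ := Nat.exists_eq_add_of_le' ha
  rw [setOf_notMem_S (by omega), ncard_setOf_div_lt_mod (fib_pos.2 (by omega)),
    five_mul_sum_range_fib, Nat.add_sub_cancel]
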